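/- Let C be a planar convex body that is k_C-rotationally symmetric about a point p in its interior, where k_C is a composite integer whose smallest divisor greater than 1 is at least 3. Then d_M(P_a) = d_M(P_b) for all divisors a, b > 1 of k_C (a chain of equalities among the values d_M over the divisors of k_C greater than 1) if and only if every prime number dividing k_C is greater than or equal to 7. -/

import Mathlib

open Metric Set

/-- Rotation of angle `α` about the point `p` in the plane `ℂ`. -/
noncomputable def rot (p : ℂ) (α : ℝ) : ℂ → ℂ :=
  fun z => p + Complex.exp (α * Complex.I) * (z - p)

/-- A planar convex body: a compact convex subset of the plane with nonempty interior. -/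
def IsConvexBody (C : Set ℂ) : Prop :=
  IsCompact C ∧ Convex ℝ C ∧ (interior C).Nonempty

/-- `C` is `k`-rotationally symmetric about `p`: the rotation of angle `2π/k`
about `p` maps `C` onto itself. -/
def IsRotSym (C : Set ℂ) (p : ℂ) (k : ℕ) : Prop :=
  rot p (2 * Real.pi / k) '' C = C

/-- The closed convex sector at `p` spanned by `x - p` and `ρ_k(x) - p`. -/
noncomputable def sector (p x : ℂ) (k : ℕ) : Set ℂ :=
  {z | ∃ a b : ℝ, 0 ≤ a ∧ 0 ≤ b ∧
    z = p + (a : ℂ) * (x - p) + (b : ℂ) * (rot p (2 * Real.pi / k) x - p)}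

/-- The maximum relative diameter of the standard `k`-partition of `C`
(with center `p` and endpoint `x`): the diameter of one piece `C ∩ S_k`. -/
noncomputable def dM (C : Set ℂ) (p x : ℂ) (k : ℕ) : ℝ :=
  Metric.diam (C ∩ sector p x k)

/-- The circumradius of `C` with respect to `p`: `sup_{y ∈ C} dist p y`. -/
noncomputable def circumrad (C : Set ℂ) (p : ℂ) : ℝ :=
  ⨆ y ∈ C, dist p y

/-! For every divisor `a ≥ 6` of `k_C`, `d_M(P_a)` is the circumradius `R`: a farthest point of
`C` rotates into the sector, and a sector of angle at most `π/3` inside the disc of radius `R`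
has diameter at most `R`. If instead a prime `q ∈ {3, 5}` divides `k_C`, then
`d_M(P_q) ≥ |x - ρ_q x| = 2 r sin(π/q)`. The tangent lines to the inscribed disc at the rotates
of `x` support `C`, which gives `R cos(π/k_C) ≤ r`; since `k_C ≥ 9`,
`2 sin(π/q) cos(π/k_C) > 1`, so `d_M(P_q) > R = d_M(P_{k_C})`. -/

open Complex (exp I)
open ComplexConjugate

lemma rot_sub_center (p : ℂ) (α : ℝ) (z : ℂ) : rot p α z - p = exp (α * I) * (z - p) := by
  simp [rot]

lemma rot_rot (p : ℂ) (α β : ℝ) (z : ℂ) : rot p α (rot p β z) = rot p (α + β) z := by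
  simp only [rot, Complex.ofReal_add, add_mul, Complex.exp_add]
  ring

@[simp]
lemma rot_zero (p z : ℂ) : rot p 0 z = z := by
  simp [rot]

lemma dist_center_rot (p : ℂ) (α : ℝ) (z : ℂ) : dist p (rot p α z) = dist p z := by
  rw [dist_comm, dist_comm p, dist_eq_norm, dist_eq_norm, rot_sub_center, norm_mul,
    Complex.norm_exp_ofReal_mul_I, one_mul]

namespace IsRotSym

variable {C : Set ℂ} {p : ℂ} {k : ℕ}

lemma rot_neg_mem (h : IsRotSym C p k) {z : ℂ} (hz : z ∈ C) :
    rot p (-(2 * Real.pi / k)) z ∈ C := by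
  rw [← h] at hz
  obtain ⟨w, hw, rfl⟩ := hz
  rwa [rot_rot, neg_add_cancel, rot_zero]

lemma rot_int_mul_mem (h : IsRotSym C p k) (j : ℤ) {z : ℂ} (hz : z ∈ C) :
    rot p (j * (2 * Real.pi / k)) z ∈ C := by
  set θ := 2 * Real.pi / k
  induction j using Int.induction_on with
  | zero => simpa using hz
  | succ j ih =>
    rw [← h, show ((j + 1 : ℤ) : ℝ) * θ = θ + j * θ by push_cast; ring, ← rot_rot]
    exact mem_image_of_mem _ ih
  | pred j ih =>
    rw [show ((-j - 1 : ℤ) : ℝ) * θ = -θ + (-j : ℤ) * θ by push_cast; ring, ← rot_rot]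
    exact h.rot_neg_mem ih

lemma of_dvd (h : IsRotSym C p k) {a : ℕ} (hak : a ∣ k) (hk : k ≠ 0) : IsRotSym C p a := by
  obtain ⟨m, rfl⟩ := hak
  have hm : (m : ℝ) ≠ 0 := by exact_mod_cast right_ne_zero_of_mul hk
  have hangle : 2 * Real.pi / a = ((m : ℤ) : ℝ) * (2 * Real.pi / (a * m : ℕ)) := by
    push_cast
    field_simp
  unfold IsRotSym
  ext z
  rw [hangle]
  refine ⟨fun ⟨w, hw, hwz⟩ => hwz ▸ h.rot_int_mul_mem m hw, fun hz => ?_⟩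
  refine ⟨_, h.rot_int_mul_mem (-m) hz, ?_⟩
  rw [rot_rot]
  push_cast
  simp

end IsRotSym

lemma exists_eq_norm_mul_exp_mul_exp (u : ℂ) {θ : ℝ} (hθ : 0 < θ) (a : ℝ) :
    ∃ γ ∈ Ico a (a + θ), ∃ j : ℤ,
      u = ‖u‖ * exp (γ * I) * exp ((j * θ : ℝ) * I) := by
  refine ⟨toIcoMod hθ a u.arg, toIcoMod_mem_Ico hθ a _, toIcoDiv hθ a u.arg, ?_⟩
  rw [mul_assoc, ← Complex.exp_add, ← add_mul, ← Complex.ofReal_add, ← zsmul_eq_mul,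
    toIcoMod_add_toIcoDiv_zsmul, Complex.norm_mul_exp_arg_mul_I]

lemma exp_neg_int_mul_mul_exp_int_mul (j : ℤ) (θ : ℝ) :
    exp (((-j : ℤ) * θ : ℝ) * I) * exp ((j * θ : ℝ) * I) = 1 := by
  rw [← Complex.exp_add, ← add_mul, ← Complex.ofReal_add]
  push_cast
  simp

lemma sin_mul_exp_mul_I (θ γ : ℝ) :
    (Real.sin θ : ℂ) * exp (γ * I) = Real.sin (θ - γ) + Real.sin γ * exp (θ * I) := by
  simp only [Complex.ofReal_sin, Complex.ofReal_sub, Complex.exp_mul_I, Complex.sin_sub]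
  ring

lemma mem_sector_of_sub_center_eq {p x z : ℂ} {k : ℕ} (hk : 3 ≤ k) {s γ : ℝ} (hs : 0 ≤ s)
    (hγ : γ ∈ Icc 0 (2 * Real.pi / k)) (hz : z - p = s * exp (γ * I) * (x - p)) :
    z ∈ sector p x k := by
  set θ := 2 * Real.pi / k with hθ_def
  have hθ : θ < Real.pi := by
    rw [div_lt_iff₀ (by positivity)]
    have := mul_le_mul_of_nonneg_left (by exact_mod_cast hk : (3 : ℝ) ≤ k) Real.pi_pos.le
    linarith [Real.pi_pos]
  have hsinθ : 0 < Real.sin θ := Real.sin_pos_of_pos_of_lt_pi (by positivity) hθ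
  refine ⟨s * Real.sin (θ - γ) / Real.sin θ, s * Real.sin γ / Real.sin θ, ?_, ?_, ?_⟩
  · have := Real.sin_nonneg_of_nonneg_of_le_pi (sub_nonneg.2 hγ.2) (by linarith [hγ.1])
    positivity
  · have := Real.sin_nonneg_of_nonneg_of_le_pi hγ.1 (by linarith [hγ.2])
    positivity
  · rw [rot_sub_center, ← hθ_def, show z = p + (z - p) by ring, hz]
    have hsin : (Real.sin θ : ℂ) ≠ 0 := Complex.ofReal_ne_zero.2 hsinθ.ne'
    have key : ((s * Real.sin (θ - γ) / Real.sin θ : ℝ) : ℂ)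
        + ((s * Real.sin γ / Real.sin θ : ℝ) : ℂ) * exp (θ * I) = s * exp (γ * I) := by
      have h := sin_mul_exp_mul_I θ γ
      generalize exp (θ * I) = E at h ⊢
      generalize exp (γ * I) = F at h ⊢
      simp only [Complex.ofReal_div, Complex.ofReal_mul, div_mul_eq_mul_div, ← add_div,
        div_eq_iff hsin]
      linear_combination (-(s : ℂ)) * h
    linear_combination (p - x) * key

lemma exists_coeff_of_mem_sector {p x z : ℂ} {k : ℕ} (hz : z ∈ sector p x k) :
    ∃ a b : ℝ, 0 ≤ a ∧ 0 ≤ b ∧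
      z - p = (a + b * exp ((2 * Real.pi / k : ℝ) * I)) * (x - p) := by
  obtain ⟨a, b, ha, hb, rfl⟩ := hz
  exact ⟨a, b, ha, hb, by rw [rot_sub_center]; ring⟩

lemma norm_sub_le_of_norm_mul_norm_le_two_mul_re {u v : ℂ} {R : ℝ} (hu : ‖u‖ ≤ R)
    (hv : ‖v‖ ≤ R) (huv : ‖u‖ * ‖v‖ ≤ 2 * (u * conj v).re) : ‖u - v‖ ≤ R := by
  have hR : 0 ≤ R := (norm_nonneg u).trans hu
  refine (pow_le_pow_iff_left₀ (norm_nonneg _) hR two_ne_zero).1 ?_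
  rw [← Complex.normSq_eq_norm_sq, Complex.normSq_sub, Complex.normSq_eq_norm_sq,
    Complex.normSq_eq_norm_sq]
  nlinarith [mul_nonneg (sub_nonneg.2 hu) (sub_nonneg.2 hv), norm_nonneg u, norm_nonneg v]

lemma norm_add_mul_exp_le {a b : ℝ} (ha : 0 ≤ a) (hb : 0 ≤ b) (θ : ℝ) :
    ‖(a : ℂ) + b * exp (θ * I)‖ ≤ a + b := by
  refine (norm_add_le _ _).trans_eq ?_
  rw [norm_mul, Complex.norm_exp_ofReal_mul_I, Complex.norm_of_nonneg ha,
    Complex.norm_of_nonneg hb, mul_one]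

lemma norm_mul_norm_le_two_mul_re_of_half_le_cos {a b c d θ : ℝ} (ha : 0 ≤ a) (hb : 0 ≤ b)
    (hc : 0 ≤ c) (hd : 0 ≤ d) (hθ : 1 / 2 ≤ Real.cos θ) (X : ℂ) :
    ‖(a + b * exp (θ * I)) * X‖ * ‖(c + d * exp (θ * I)) * X‖
      ≤ 2 * ((a + b * exp (θ * I)) * X * conj ((c + d * exp (θ * I)) * X)).re := by
  have hre : ((a + b * exp (θ * I)) * X * conj ((c + d * exp (θ * I)) * X)).re
      = (a * c + b * d + (a * d + b * c) * Real.cos θ) * ‖X‖ ^ 2 := by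
    rw [← Complex.normSq_eq_norm_sq]
    simp only [map_mul, map_add, Complex.conj_ofReal, Complex.mul_re, Complex.mul_im,
      Complex.add_re, Complex.add_im, Complex.ofReal_re, Complex.ofReal_im, Complex.conj_re,
      Complex.conj_im, Complex.normSq_apply, Complex.exp_ofReal_mul_I_re,
      Complex.exp_ofReal_mul_I_im]
    linear_combination (b * d * (X.re ^ 2 + X.im ^ 2)) * Real.sin_sq_add_cos_sq θ
  rw [norm_mul, norm_mul, hre]
  have hab := norm_add_mul_exp_le ha hb θ
  have hcd := norm_add_mul_exp_le hc hd θ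
  calc _ ≤ (a + b) * ‖X‖ * ((c + d) * ‖X‖) := by gcongr
    _ ≤ _ := by
      have hX := sq_nonneg ‖X‖
      nlinarith [mul_nonneg (mul_nonneg (add_nonneg (mul_nonneg ha hd) (mul_nonneg hb hc)) hX)
        (sub_nonneg.2 hθ), mul_nonneg (mul_nonneg ha hc) hX, mul_nonneg (mul_nonneg hb hd) hX]

lemma half_le_cos_two_pi_div {k : ℕ} (hk : 6 ≤ k) : 1 / 2 ≤ Real.cos (2 * Real.pi / k) := by
  rw [← Real.cos_pi_div_three]
  apply Real.cos_le_cos_of_nonneg_of_le_pi (by positivity) (by linarith [Real.pi_pos])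
  rw [div_le_div_iff₀ (by positivity) (by norm_num)]
  have := mul_le_mul_of_nonneg_left (by exact_mod_cast hk : (6 : ℝ) ≤ k) Real.pi_pos.le
  linarith

lemma dM_le_of_six_le {C : Set ℂ} {p x : ℂ} {k : ℕ} (hk : 6 ≤ k) {R : ℝ} (hR0 : 0 ≤ R)
    (hR : ∀ y ∈ C, dist p y ≤ R) : dM C p x k ≤ R := by
  refine diam_le_of_forall_dist_le hR0 fun z hz w hw => ?_
  obtain ⟨a, b, ha, hb, hza⟩ := exists_coeff_of_mem_sector hz.2
  obtain ⟨c, d, hc, hd, hwc⟩ := exists_coeff_of_mem_sector hw.2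
  have hzR : ‖z - p‖ ≤ R := by simpa [dist_eq_norm'] using hR z hz.1
  have hwR : ‖w - p‖ ≤ R := by simpa [dist_eq_norm'] using hR w hw.1
  rw [dist_eq_norm, ← sub_sub_sub_cancel_right z w p]
  refine norm_sub_le_of_norm_mul_norm_le_two_mul_re hzR hwR ?_
  rw [hza, hwc]
  exact norm_mul_norm_le_two_mul_re_of_half_le_cos ha hb hc hd (half_le_cos_two_pi_div hk) _

lemma exists_mem_sector_dist_eq {C : Set ℂ} {p x y : ℂ} {k : ℕ} (hsym : IsRotSym C p k)
    (hk : 3 ≤ k) (hxp : x ≠ p) (hy : y ∈ C) :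
    ∃ y' ∈ C ∩ sector p x k, dist p y' = dist p y := by
  set θ := 2 * Real.pi / k
  have hθ : 0 < θ := by positivity
  set u := (y - p) / (x - p)
  obtain ⟨γ, hγ, j, hu⟩ := exists_eq_norm_mul_exp_mul_exp u hθ 0
  refine ⟨rot p ((-j : ℤ) * θ) y, ⟨hsym.rot_int_mul_mem (-j) hy, ?_⟩,
    dist_center_rot _ _ _⟩
  refine mem_sector_of_sub_center_eq hk (norm_nonneg u) ⟨hγ.1, by linarith [hγ.2]⟩ ?_
  have hyu : y - p = ‖u‖ * exp (γ * I) * exp ((j * θ : ℝ) * I) * (x - p) := by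
    rw [← hu]
    exact (div_mul_cancel₀ _ (sub_ne_zero.2 hxp)).symm
  rw [rot_sub_center, hyu]
  linear_combination (‖u‖ * exp (γ * I) * (x - p)) * exp_neg_int_mul_mul_exp_int_mul j θ

lemma dM_eq_dist_of_isMaxOn {C : Set ℂ} {p x y₀ : ℂ} {k : ℕ} (hC : Bornology.IsBounded C)
    (hsym : IsRotSym C p k) (hk : 6 ≤ k) (hpC : p ∈ C) (hxp : x ≠ p)
    (hmax : IsMaxOn (dist p) C y₀) (hy₀ : y₀ ∈ C) : dM C p x k = dist p y₀ := by
  refine le_antisymm (dM_le_of_six_le hk dist_nonneg fun y hy => hmax hy) ?_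
  obtain ⟨y', hy', hdist⟩ := exists_mem_sector_dist_eq hsym (by omega) hxp hy₀
  rw [← hdist]
  exact dist_le_diam_of_mem (hC.subset inter_subset_left)
    ⟨hpC, 0, 0, le_rfl, le_rfl, by simp⟩ hy'

lemma two_mul_dist_mul_sin_le_dM {C : Set ℂ} {p x : ℂ} {k : ℕ} (hC : Bornology.IsBounded C)
    (hsym : IsRotSym C p k) (hx : x ∈ C) :
    2 * dist p x * Real.sin (Real.pi / k) ≤ dM C p x k := by
  have hx' : rot p (2 * Real.pi / k) x ∈ C := by simpa using hsym.rot_int_mul_mem 1 hx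
  have hchord : dist x (rot p (2 * Real.pi / k) x) = |2 * Real.sin (Real.pi / k)| * dist p x := by
    rw [dist_comm, dist_eq_norm, ← sub_sub_sub_cancel_right _ x p, rot_sub_center,
      ← sub_one_mul, norm_mul, mul_comm _ I, Complex.norm_exp_I_mul_ofReal_sub_one, dist_eq_norm',
      Real.norm_eq_abs]
    ring_nf
  calc 2 * dist p x * Real.sin (Real.pi / k)
      ≤ |2 * Real.sin (Real.pi / k)| * dist p x := by
        rw [mul_right_comm]; gcongr; exact le_abs_self _
    _ = dist x (rot p (2 * Real.pi / k) x) := hchord.symm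
    _ ≤ dM C p x k := dist_le_diam_of_mem (hC.subset inter_subset_left)
        ⟨hx, 1, 0, zero_le_one, le_rfl, by simp⟩ ⟨hx', 0, 1, le_rfl, zero_le_one, by simp⟩

lemma ball_infDist_frontier_subset_interior {E : Type*} [NormedAddCommGroup E] [NormedSpace ℝ E]
    {C : Set E} {p : E} (hp : p ∈ interior C) :
    ball p (infDist p (frontier C)) ⊆ interior C := by
  rcases (infDist_nonneg (x := p) (s := frontier C)).eq_or_lt with h | h
  · simp [← h]
  refine (convex_ball _ _).isPreconnected.subset_of_closure_inter_subset isOpen_interior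
    ⟨p, mem_ball_self h, hp⟩ fun y ⟨hyc, hyb⟩ => ?_
  by_contra hyi
  have hy : y ∈ frontier C := ⟨closure_mono interior_subset hyc, hyi⟩
  have := infDist_le_dist_of_mem (x := p) hy
  rw [mem_ball, dist_comm] at hyb
  linarith

lemma inner_sub_le_of_dist_eq_infDist_frontier {E : Type*} [NormedAddCommGroup E]
    [InnerProductSpace ℝ E] {C : Set E} {p x z : E} (hC : Convex ℝ C) (hp : p ∈ interior C)
    (hx : x ∈ frontier C) (hxr : dist p x = infDist p (frontier C)) (hz : z ∈ C) :
    inner ℝ (x - p) (z - p) ≤ ‖x - p‖ ^ 2 := by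
  by_contra! hK
  -- Then `x` lies strictly between `z` and a point `w` of the inscribed open disc.
  set u := x - p
  set v := z - p
  set D := inner ℝ u v - ‖u‖ ^ 2
  have hD : 0 < D := sub_pos.2 hK
  set t := D / (D + ‖v‖ ^ 2)
  have hDN : 0 < D + ‖v‖ ^ 2 := by positivity
  have ht0 : 0 < t := div_pos hD hDN
  have hv : v ≠ 0 := by
    rintro hv
    rw [hv, inner_zero_right] at hK
    exact not_lt.2 (sq_nonneg _) hK
  have ht1 : t < 1 := (div_lt_one hDN).2 (by simpa using pow_pos (norm_pos_iff.2 hv) 2)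
  have htN : t * ‖v‖ ^ 2 ≤ D := by
    rw [div_mul_eq_mul_div, div_le_iff₀ hDN]
    nlinarith [sq_nonneg ‖v‖]
  have hnorm : ‖u - t • v‖ < (1 - t) * ‖u‖ := by
    refine (pow_lt_pow_iff_left₀ (norm_nonneg _) (by nlinarith [norm_nonneg u]) two_ne_zero).1 ?_
    rw [norm_sub_sq_real, inner_smul_right, norm_smul, Real.norm_of_nonneg ht0.le]
    nlinarith [mul_pos ht0 hD, mul_nonneg (mul_nonneg ht0.le ht0.le) (sq_nonneg ‖u‖)]
  set w := p + (1 - t)⁻¹ • (u - t • v)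
  have hw : w ∈ ball p (infDist p (frontier C)) := by
    rw [← hxr, mem_ball, dist_eq_norm, add_sub_cancel_left, norm_smul,
      Real.norm_of_nonneg (inv_nonneg.2 (sub_pos.2 ht1).le), inv_mul_lt_iff₀ (sub_pos.2 ht1),
      dist_eq_norm']
    exact hnorm
  have hxw : (1 - t) • w + t • z = x := by
    simp only [w, u, v, smul_add, smul_smul, mul_inv_cancel₀ (sub_pos.2 ht1).ne', one_smul]
    module
  apply hx.2
  rw [← hxw]
  exact hC.combo_interior_self_mem_interior (ball_infDist_frontier_subset_interior hp hw) hz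
    (sub_pos.2 ht1) ht0.le (by ring)

lemma dist_mul_cos_pi_div_le {C : Set ℂ} {p x z : ℂ} {k : ℕ} (hk : 0 < k) (hC : Convex ℝ C)
    (hsym : IsRotSym C p k) (hp : p ∈ interior C) (hx : x ∈ frontier C)
    (hxr : dist p x = infDist p (frontier C)) (hz : z ∈ C) :
    dist p z * Real.cos (Real.pi / k) ≤ dist p x := by
  have hr : 0 < dist p x := dist_pos.2 fun h => hx.2 (h ▸ hp)
  set θ := 2 * Real.pi / k
  have hθ : 0 < θ := by positivity
  set v := (z - p) * conj (x - p)
  -- Rotate `z` until the angle between `z - p` and `x - p` is at most `π / k`.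
  obtain ⟨γ, hγ, j, hv⟩ := exists_eq_norm_mul_exp_mul_exp v hθ (-(θ / 2))
  have hsupp := inner_sub_le_of_dist_eq_infDist_frontier hC hp hx hxr
    (hsym.rot_int_mul_mem (-j) hz)
  have hre : inner ℝ (x - p) (rot p ((-j : ℤ) * θ) z - p) = ‖v‖ * Real.cos γ := by
    rw [Complex.inner, rot_sub_center, mul_assoc, ← Complex.exp_ofReal_mul_I_re γ,
      ← Complex.re_ofReal_mul]
    congr 1
    linear_combination exp (((-j : ℤ) * θ : ℝ) * I) * hv +
      (‖v‖ * exp (γ * I)) * exp_neg_int_mul_mul_exp_int_mul j θ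
  have hcos : Real.cos (Real.pi / k) ≤ Real.cos γ := by
    have hθ2 : θ / 2 = Real.pi / k := by ring
    rw [← Real.cos_abs γ]
    refine Real.cos_le_cos_of_nonneg_of_le_pi (abs_nonneg _)
      (div_le_self Real.pi_pos.le (by exact_mod_cast hk)) ?_
    rw [abs_le, ← hθ2]
    exact ⟨hγ.1, by linarith [hγ.2]⟩
  have hv_norm : ‖v‖ = dist p z * dist p x := by
    rw [norm_mul, Complex.norm_conj, dist_eq_norm', dist_eq_norm']
  rw [hre, hv_norm, ← dist_eq_norm' p x] at hsupp
  nlinarith [mul_le_mul_of_nonneg_left hcos (mul_nonneg (dist_nonneg (x := p) (y := z)) hr.le)]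

lemma one_lt_two_mul_sin_pi_div_mul_cos_pi_div {q k : ℕ} (hq : 2 ≤ q) (hq5 : q ≤ 5)
    (hk : 9 ≤ k) : 1 < 2 * Real.sin (Real.pi / q) * Real.cos (Real.pi / k) := by
  have hπ := Real.pi_gt_d2
  have hπ' := Real.pi_lt_d2
  have hq' : (2 : ℝ) ≤ q := by exact_mod_cast hq
  have hsin : 0.56 < Real.sin (Real.pi / q) := by
    calc (0.56 : ℝ) < Real.sin (Real.pi / 5) := by
          have hcube : (Real.pi / 5) ^ 3 < 0.63 ^ 3 :=
            pow_lt_pow_left₀ (by linarith) (by positivity) three_ne_zero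
          linarith [Real.sin_gt_sub_cube (x := Real.pi / 5) (by positivity)]
      _ ≤ Real.sin (Real.pi / q) := by
          refine Real.sin_le_sin_of_le_of_le_pi_div_two (by linarith [Real.pi_pos])
            (div_le_div_of_nonneg_left Real.pi_pos.le two_pos hq') ?_
          exact div_le_div_of_nonneg_left Real.pi_pos.le (by positivity) (by exact_mod_cast hq5)
  have hcos : 0.93 < Real.cos (Real.pi / k) := by
    calc (0.93 : ℝ) < Real.cos (Real.pi / 9) := by
          nlinarith [Real.one_sub_sq_div_two_le_cos (x := Real.pi / 9)]
      _ ≤ Real.cos (Real.pi / k) := by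
          refine Real.cos_le_cos_of_nonneg_of_le_pi (by positivity) (by linarith) ?_
          exact div_le_div_of_nonneg_left Real.pi_pos.le (by norm_num) (by exact_mod_cast hk)
  nlinarith

lemma Nat.nine_le_of_not_prime {n : ℕ} (hn : ¬ n.Prime) (hmin : 3 ≤ n.minFac) : 9 ≤ n := by
  have hn0 : 0 < n := Nat.pos_of_ne_zero fun h => by simp [h] at hmin
  calc 9 = 3 ^ 2 := rfl
    _ ≤ n.minFac ^ 2 := Nat.pow_le_pow_left hmin 2
    _ ≤ n := Nat.minFac_sq_le_self hn0 hn

lemma Nat.le_of_forall_prime_dvd_le {n c m : ℕ} (h : ∀ q : ℕ, q.Prime → q ∣ n → m ≤ q)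
    (hc : c ∣ n) (hc1 : 1 < c) : m ≤ c :=
  (h _ (Nat.minFac_prime hc1.ne') ((Nat.minFac_dvd c).trans hc)).trans
    (Nat.minFac_le (by omega))

lemma dist_lt_dM_of_dvd_of_le_five {C : Set ℂ} {p x y : ℂ} {k q : ℕ} (hC : IsConvexBody C)
    (hsym : IsRotSym C p k) (hk : 9 ≤ k) (hp : p ∈ interior C) (hx : x ∈ frontier C)
    (hxr : dist p x = infDist p (frontier C)) (hy : y ∈ C) (hqk : q ∣ k) (hq : 2 ≤ q)
    (hq5 : q ≤ 5) : dist p y < dM C p x q := by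
  have hchord := two_mul_dist_mul_sin_le_dM hC.1.isBounded (hsym.of_dvd hqk (by omega))
    (hC.1.isClosed.frontier_subset hx)
  have hR := dist_mul_cos_pi_div_le (by omega) hC.2.1 hsym hp hx hxr hy
  have hr : 0 < dist p x := dist_pos.2 fun h => hx.2 (h ▸ hp)
  have hsin : 0 ≤ Real.sin (Real.pi / q) := Real.sin_nonneg_of_nonneg_of_le_pi (by positivity)
    (div_le_self Real.pi_pos.le (by exact_mod_cast (by omega : 1 ≤ q)))
  have key := one_lt_two_mul_sin_pi_div_mul_cos_pi_div hq hq5 hk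
  have hcos : 0 < Real.cos (Real.pi / k) := by nlinarith
  nlinarith [mul_le_mul_of_nonneg_right hchord hcos.le, mul_lt_mul_of_pos_left key hr]

theorem stmt_13_general (C : Set ℂ) (p x : ℂ) (kC : ℕ) (hC : IsConvexBody C)
    (hcomp : ¬ kC.Prime) (hmin : 3 ≤ kC.minFac)
    (hsym : IsRotSym C p kC) (hp : p ∈ interior C)
    (hx : x ∈ frontier C) (hxr : dist p x = infDist p (frontier C)) :
    (∀ a b : ℕ, a ∣ kC → b ∣ kC → 1 < a → 1 < b → dM C p x a = dM C p x b)
      ↔ ∀ q : ℕ, q.Prime → q ∣ kC → 7 ≤ q := by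
  have hkC : 9 ≤ kC := Nat.nine_le_of_not_prime hcomp hmin
  obtain ⟨y₀, hy₀, hmax⟩ := hC.1.exists_isMaxOn ⟨p, interior_subset hp⟩
    (continuous_const.dist continuous_id).continuousOn
  have hdM : ∀ a, a ∣ kC → 6 ≤ a → dM C p x a = dist p y₀ := fun a ha ha6 =>
    dM_eq_dist_of_isMaxOn hC.1.isBounded (hsym.of_dvd ha (by omega)) ha6 (interior_subset hp)
      (fun h => hx.2 (h ▸ hp)) hmax hy₀
  constructor
  · intro hchain q hq hqk
    by_contra! hq7
    have hq6 : q ≠ 6 := by rintro rfl; norm_num at hq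
    have hlt := dist_lt_dM_of_dvd_of_le_five hC hsym hkC hp hx hxr hy₀ hqk hq.two_le (by omega)
    rw [hchain q kC hqk dvd_rfl hq.one_lt (by omega), hdM kC dvd_rfl (by omega)] at hlt
    exact lt_irrefl _ hlt
  · intro h a b ha hb ha1 hb1
    rw [hdM a ha (by linarith [Nat.le_of_forall_prime_dvd_le h ha ha1]),
      hdM b hb (by linarith [Nat.le_of_forall_prime_dvd_le h hb hb1])]

/-- For a multi-rotationally symmetric planar convex body with composite
maximal degree `k_C` and minimal degree `minFac k_C ≥ 3`, the values
`d_M(P_a)` over all divisors `a > 1` of `k_C` all coincide iff every prime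
dividing `k_C` is at least `7`. -/
theorem stmt_13 (C : Set ℂ) (p x : ℂ) (kC : ℕ) (hC : IsConvexBody C)
    (hk2 : 2 ≤ kC) (hcomp : ¬ kC.Prime) (hmin : 3 ≤ kC.minFac)
    (hsym : IsRotSym C p kC) (hp : p ∈ interior C)
    (hx : x ∈ frontier C) (hxr : dist p x = infDist p (frontier C)) :
    (∀ a b : ℕ, a ∣ kC → b ∣ kC → 1 < a → 1 < b → dM C p x a = dM C p x b)
      ↔ ∀ q : ℕ, q.Prime → q ∣ kC → 7 ≤ q :=
  stmt_13_general C p x kC hC hcomp hmin hsym hp hx hxr
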